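/- arXiv:0801.0162 — 4 statements merged into one kernel-verified Lean document; each statement's English description precedes it below -/
import Mathlib

section
/- Let K[SL(2)] = K[α,β,γ,δ]/(αδ−βγ−1) and let φ*: K[Y] → K[SL(2)] be given on monomial generators by φ*(x₁^m x₂^{q−m} y₁^l y₂^{p−l}) = α^m γ^{q−m} β^l δ^{p−l} (0 ≤ m ≤ q, 0 ≤ l ≤ p, q > p ≥ 1, gcd(p,q)=1). If a monomial α^t β^w (t, w ≥ 0, (t,w) ≠ (0,0)) lies in the image of φ*, then w/t ≤ p/q. -/
open MvPolynomial

/-!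
Specialise the identity along the upper triangular matrices `[[u, v], [0, u⁻¹]]` of `SL(2)`,
i.e. `α ↦ u, β ↦ v, γ ↦ 0, δ ↦ u⁻¹` with `u, v` independent variables. This kills every term
with `mᵢ < q` and sends the others to `zᵢ u^(q-p+lᵢ) v^lᵢ`, so `α^t β^w` must become one of
these monomials: `t = q - p + w` with `w ≤ p`, whence `q w ≤ p t`.
-/

theorem RingHom.map_eq_of_sub_mem_span_singleton {R S : Type*} [CommRing R] [CommRing S]
    (φ : R →+* S) {g a b : R} (hg : φ g = 0) (h : a - b ∈ Ideal.span {g}) : φ a = φ b := by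
  obtain ⟨c, hc⟩ := Ideal.mem_span_singleton'.mp h
  rw [← sub_eq_zero, ← map_sub, ← hc, map_mul, hg, mul_zero]

namespace MvPolynomial

theorem exists_eq_of_sum_monomial_eq_monomial {R σ ι : Type*} [CommSemiring R] [Nontrivial R]
    (s : Finset ι) (e : ι → σ →₀ ℕ) (c : ι → R) (d : σ →₀ ℕ)
    (h : ∑ i ∈ s, monomial (e i) (c i) = monomial d 1) : ∃ i ∈ s, e i = d := by
  classical
  by_contra! hne
  have hcoeff := congrArg (coeff d) h
  simp only [coeff_sum, coeff_monomial] at hcoeff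
  rw [Finset.sum_eq_zero fun i hi => if_neg (hne i hi)] at hcoeff
  exact zero_ne_one hcoeff

theorem exists_exponents_eq_of_sum_eq_X_pow_mul_X_pow {R σ ι : Type*} [CommSemiring R]
    [Nontrivial R] {j k : σ} (hjk : j ≠ k) (s : Finset ι) (c : ι → R) (a b : ι → ℕ) (t w : ℕ)
    (h : ∑ i ∈ s, C (c i) * X j ^ a i * X k ^ b i = X j ^ t * X k ^ w) :
    ∃ i ∈ s, a i = t ∧ b i = w := by
  classical
  simp only [X_pow_eq_monomial, C_mul_monomial, monomial_mul, mul_one] at h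
  obtain ⟨i, hi, he⟩ := exists_eq_of_sum_monomial_eq_monomial s _ _ _ h
  refine ⟨i, hi, ?_, ?_⟩
  · simpa [Finsupp.single_apply, hjk.symm] using DFunLike.congr_fun he j
  · simpa [Finsupp.single_apply, hjk] using DFunLike.congr_fun he k

end MvPolynomial

section UpperTriangular

variable (K : Type*) [Field K]

local notation "ι" => algebraMap (MvPolynomial (Fin 2) K) (FractionRing (MvPolynomial (Fin 2) K))

noncomputable def upperTriangularEval :
    MvPolynomial (Fin 4) K →ₐ[K] FractionRing (MvPolynomial (Fin 2) K) :=
  aeval ![ι (X 0), ι (X 1), 0, (ι (X 0))⁻¹]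

variable {K}

theorem upperTriangularEval_det : upperTriangularEval K (X 0 * X 3 - X 1 * X 2 - 1) = 0 := by
  simp [upperTriangularEval]

theorem upperTriangularEval_X_pow_mul_X_pow (t w : ℕ) :
    upperTriangularEval K (X 0 ^ t * X 1 ^ w) = ι (X 0 ^ t * X 1 ^ w) := by
  simp [upperTriangularEval]

theorem upperTriangularEval_term {p q m : ℕ} (hpq : p ≤ q) (hm : m ≤ q) (a : K) (l : ℕ) :
    upperTriangularEval K (C a * X 0 ^ m * X 2 ^ (q - m) * X 1 ^ l * X 3 ^ (p - l)) =
      ι (C (if m = q then a else 0) * X 0 ^ (q - (p - l)) * X 1 ^ l) := by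
  obtain rfl | hmq := eq_or_lt_of_le hm
  · simp only [upperTriangularEval, tsub_self, pow_zero, mul_one, map_mul, algHom_C, map_pow,
      aeval_X, Matrix.cons_val_zero, Matrix.cons_val_one, Matrix.cons_val, inv_pow, if_pos,
      pow_sub₀ (ι (X 0)) (by simp) ((Nat.sub_le p l).trans hpq)]
    rw [IsScalarTower.algebraMap_apply K (MvPolynomial (Fin 2) K), algebraMap_eq]
    ring
  · simp [upperTriangularEval, hmq.ne, Nat.sub_ne_zero_of_lt hmq]

end UpperTriangular

theorem stmt7_general (K : Type*) [Field K]
    (p q : ℕ) (hpq : p < q)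
    (N : ℕ) (z : Fin N → K) (m l : Fin N → ℕ)
    (hm : ∀ i, m i ≤ q) (hl : ∀ i, l i ≤ p)
    (t w : ℕ)
    (h : (∑ i, C (z i) * X 0 ^ m i * X 2 ^ (q - m i) * X 1 ^ l i * X 3 ^ (p - l i))
          - X 0 ^ t * X 1 ^ w
        ∈ Ideal.span {(X 0 * X 3 - X 1 * X 2 - 1 : MvPolynomial (Fin 4) K)}) :
    q * w ≤ p * t := by
  have hspecial : ∑ i, C (if m i = q then z i else 0) * X 0 ^ (q - (p - l i)) * X 1 ^ l i =
      (X 0 ^ t * X 1 ^ w : MvPolynomial (Fin 2) K) := by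
    apply IsFractionRing.injective (MvPolynomial (Fin 2) K) (FractionRing (MvPolynomial (Fin 2) K))
    have := (upperTriangularEval K).toRingHom.map_eq_of_sub_mem_span_singleton
      upperTriangularEval_det h
    simpa only [AlgHom.toRingHom_eq_coe, RingHom.coe_coe, map_sum,
      upperTriangularEval_term hpq.le (hm _), upperTriangularEval_X_pow_mul_X_pow] using this
  obtain ⟨i, -, hti, hwi⟩ :=
    exists_exponents_eq_of_sum_eq_X_pow_mul_X_pow (by decide) _ _ _ _ t w hspecial
  obtain ⟨d, rfl⟩ := Nat.exists_eq_add_of_le hpq.le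
  obtain rfl : t = d + w := by have := hl i; omega
  nlinarith [Nat.mul_le_mul_left d (hl i)]

/-- Proposition 7 (polynomial form).  In `K[α,β,γ,δ]` with `α = X 0`, `β = X 1`,
`γ = X 2`, `δ = X 3`: if
`Σᵢ zᵢ α^{mᵢ} γ^{q−mᵢ} β^{lᵢ} δ^{p−lᵢ} ≡ α^t β^w  (mod (αδ−βγ−1))`
with `0 ≤ mᵢ ≤ q`, `0 ≤ lᵢ ≤ p`, `zᵢ` not all zero, `1 ≤ p < q`, `gcd(p,q)=1`,
then `w/t ≤ p/q`, i.e. `q·w ≤ p·t`. -/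
theorem stmt7 (K : Type*) [Field K] [IsAlgClosed K] [CharZero K]
    (p q : ℕ) (hp : 1 ≤ p) (hpq : p < q) (hcop : Nat.Coprime p q)
    (N : ℕ) (z : Fin N → K) (m l : Fin N → ℕ)
    (hm : ∀ i, m i ≤ q) (hl : ∀ i, l i ≤ p) (hz : ∃ i, z i ≠ 0)
    (t w : ℕ)
    (h : (∑ i, C (z i) * X 0 ^ m i * X 2 ^ (q - m i) * X 1 ^ l i * X 3 ^ (p - l i))
          - X 0 ^ t * X 1 ^ w
        ∈ Ideal.span {(X 0 * X 3 - X 1 * X 2 - 1 : MvPolynomial (Fin 4) K)}) :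
    q * w ≤ p * t :=
  stmt7_general K p q hpq N z m l hm hl t w h
end

section
/- With notation as above, setting γ = 0 and δ = 1/α in the congruence Σᵢ zᵢ α^{mᵢ} γ^{q−mᵢ} β^{lᵢ} δ^{p−lᵢ} = α^t β^w + (αδ−βγ−1)F shows: any monomial α^t β^w in the image of φ* satisfies t = q − p + w with 0 ≤ w ≤ p. In particular α^q β^p is in the image (being φ*(x₁^q y₁^p)) and achieves the maximal ratio w/t = p/q. -/
/-!
Under `γ ↦ 0`, `δ ↦ α⁻¹` the relation `αδ - βγ - 1` vanishes, so the congruence becomes an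
identity of Laurent polynomials in `α, β`. A generator `α^m γ^(q-m) β^l δ^(p-l)` survives only
when `m = q`, and then becomes `α^(q-p+l) β^l`; some surviving term must match `α^t β^w`, whence
`w = l ≤ p` and `t = q - p + w`.
-/

open MvPolynomial AddMonoidAlgebra

namespace SL2Specialization

variable {K : Type*} [CommRing K]

/-- The variables `X 0, X 1, X 2, X 3` are `α, β, γ, δ`; in `K[ℤ × ℤ]` the basis element
`single (i, j) 1` is the Laurent monomial `α^i β^j`. -/
noncomputable def gammaZeroDeltaInvAlpha : MvPolynomial (Fin 4) K →ₐ[K] K[ℤ × ℤ] :=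
  aeval ![single (1, 0) 1, single (0, 1) 1, 0, single (-1, 0) 1]

theorem gammaZeroDeltaInvAlpha_relation :
    gammaZeroDeltaInvAlpha (X 0 * X 3 - X 1 * X 2 - 1 : MvPolynomial (Fin 4) K) = 0 := by
  simp only [gammaZeroDeltaInvAlpha, map_sub, map_mul, map_one, aeval_X]
  simp [single_mul_single, AddMonoidAlgebra.one_def, Prod.mk_zero_zero]

theorem gammaZeroDeltaInvAlpha_eq_of_sub_mem {f g : MvPolynomial (Fin 4) K}
    (h : f - g ∈ Ideal.span {(X 0 * X 3 - X 1 * X 2 - 1 : MvPolynomial (Fin 4) K)}) :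
    gammaZeroDeltaInvAlpha f = gammaZeroDeltaInvAlpha g := by
  obtain ⟨c, hc⟩ := Ideal.mem_span_singleton.mp h
  rw [← sub_eq_zero, ← map_sub, hc, map_mul, gammaZeroDeltaInvAlpha_relation, zero_mul]

theorem gammaZeroDeltaInvAlpha_term (c : K) (a g b d : ℕ) :
    gammaZeroDeltaInvAlpha (C c * X 0 ^ a * X 2 ^ g * X 1 ^ b * X 3 ^ d) =
      single ((a : ℤ) - d, (b : ℤ)) (c * 0 ^ g) := by
  simp only [gammaZeroDeltaInvAlpha, map_mul, map_pow, aeval_X, aeval_C]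
  rcases g with _ | g <;>
    simp [single_pow, single_mul_single, AddMonoidAlgebra.coe_algebraMap, sub_eq_add_neg]

theorem exists_index_of_sub_mem_span [Nontrivial K] {N : ℕ} (z : Fin N → K) (m l : Fin N → ℕ)
    {p q : ℕ} (hm : ∀ i, m i ≤ q) {t w : ℕ}
    (h : (∑ i, C (z i) * X 0 ^ m i * X 2 ^ (q - m i) * X 1 ^ l i * X 3 ^ (p - l i))
          - X 0 ^ t * X 1 ^ w
        ∈ Ideal.span {(X 0 * X 3 - X 1 * X 2 - 1 : MvPolynomial (Fin 4) K)}) :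
    ∃ i, m i = q ∧ l i = w ∧ t + (p - l i) = q := by
  have hmonomial : (X 0 ^ t * X 1 ^ w : MvPolynomial (Fin 4) K) =
      C 1 * X 0 ^ t * X 2 ^ 0 * X 1 ^ w * X 3 ^ 0 := by simp
  have hcoeff := congrArg (fun f : K[ℤ × ℤ] => f.coeff (t, w))
    (gammaZeroDeltaInvAlpha_eq_of_sub_mem h)
  simp only [map_sum, hmonomial, gammaZeroDeltaInvAlpha_term, AddMonoidAlgebra.coeff_sum,
    AddMonoidAlgebra.coeff_single, Finsupp.finsetSum_apply, Finsupp.single_apply] at hcoeff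
  rw [if_pos (by simp), pow_zero, mul_one] at hcoeff
  obtain ⟨i, -, hi⟩ := Finset.exists_ne_zero_of_sum_ne_zero (hcoeff ▸ one_ne_zero)
  obtain ⟨hexp, hi⟩ := ite_ne_right_iff.mp hi
  have hmi : m i = q := by
    have : q - m i = 0 := by simpa using right_ne_zero_of_mul hi
    have := hm i
    omega
  simp only [Prod.mk.injEq] at hexp
  refine ⟨i, hmi, by omega, by omega⟩

end SL2Specialization

open SL2Specialization

theorem stmt8_general (K : Type*) [Field K]
    (p q : ℕ) (hpq : p < q)
    (N : ℕ) (z : Fin N → K) (m l : Fin N → ℕ)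
    (hm : ∀ i, m i ≤ q) (hl : ∀ i, l i ≤ p)
    (t w : ℕ)
    (h : (∑ i, C (z i) * X 0 ^ m i * X 2 ^ (q - m i) * X 1 ^ l i * X 3 ^ (p - l i))
          - X 0 ^ t * X 1 ^ w
        ∈ Ideal.span {(X 0 * X 3 - X 1 * X 2 - 1 : MvPolynomial (Fin 4) K)}) :
    (t = q - p + w ∧ w ≤ p) ∧
    (X 0 ^ q * X 2 ^ (q - q) * X 1 ^ p * X 3 ^ (p - p)
        = (X 0 ^ q * X 1 ^ p : MvPolynomial (Fin 4) K)) ∧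
    ((p : ℚ) / ((q : ℚ) - p + p) = (p : ℚ) / q) := by
  obtain ⟨i, -, rfl, hexp⟩ := exists_index_of_sub_mem_span z m l hm h
  have hli := hl i
  exact ⟨⟨by omega, hli⟩, by simp, by rw [sub_add_cancel]⟩

/-- Setting `γ = 0`, `δ = 1/α` in the congruence shows: any monomial `α^t β^w`
in the image of `φ*` satisfies `t = q − p + w` with `0 ≤ w ≤ p`.  In particular
`α^q β^p` is in the image (being `φ*(x₁^q y₁^p) = α^q γ^0 β^p δ^0`) and achieves
the maximal ratio `w/t = p/q`. -/
theorem stmt8 (K : Type*) [Field K] [IsAlgClosed K] [CharZero K]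
    (p q : ℕ) (hp : 1 ≤ p) (hpq : p < q) (hcop : Nat.Coprime p q)
    (N : ℕ) (z : Fin N → K) (m l : Fin N → ℕ)
    (hm : ∀ i, m i ≤ q) (hl : ∀ i, l i ≤ p) (hz : ∃ i, z i ≠ 0)
    (t w : ℕ)
    (h : (∑ i, C (z i) * X 0 ^ m i * X 2 ^ (q - m i) * X 1 ^ l i * X 3 ^ (p - l i))
          - X 0 ^ t * X 1 ^ w
        ∈ Ideal.span {(X 0 * X 3 - X 1 * X 2 - 1 : MvPolynomial (Fin 4) K)}) :
    (t = q - p + w ∧ w ≤ p) ∧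
    (X 0 ^ q * X 2 ^ (q - q) * X 1 ^ p * X 3 ^ (p - p)
        = (X 0 ^ q * X 1 ^ p : MvPolynomial (Fin 4) K)) ∧
    ((p : ℚ) / ((q : ℚ) - p + p) = (p : ℚ) / q) :=
  stmt8_general K p q hpq N z m l hm hl t w h
end

section
/- The cone σ = {(r,s,t) ∈ ℚ³ : t ≥ 0, lq·r + t ≥ 0, lp·s + t ≥ 0, lq·r + lp·s + t ≥ 0} (l, p, q positive integers with p < q) is generated as a convex cone by the four vectors (1,0,0), (0,1,0), (−1,0,lq), (0,−1,lp), and each of these four rays is an extremal ray of σ. -/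
open scoped BigOperators

set_option maxHeartbeats 1000000

/-- The cone `σ = {(r,s,t) ∈ ℚ³ : t ≥ 0, lq·r+t ≥ 0, lp·s+t ≥ 0, lq·r+lp·s+t ≥ 0}`
is generated as a convex cone by `(1,0,0), (0,1,0), (−1,0,lq), (0,−1,lp)`, and
each of these four rays is extremal. -/
theorem stmt12 (l p q : ℕ) (hl : 0 < l) (hp : 0 < p) (hq : 0 < q) (hpq : p < q)
    (σ : Set (Fin 3 → ℚ))
    (hσ : σ = {w : Fin 3 → ℚ | 0 ≤ w 2 ∧ 0 ≤ (l * q : ℚ) * w 0 + w 2 ∧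
        0 ≤ (l * p : ℚ) * w 1 + w 2 ∧
        0 ≤ (l * q : ℚ) * w 0 + (l * p : ℚ) * w 1 + w 2})
    (v : Fin 4 → Fin 3 → ℚ)
    (hv : v = ![![1, 0, 0], ![0, 1, 0], ![-1, 0, (l * q : ℚ)], ![0, -1, (l * p : ℚ)]]) :
    (σ = {w | ∃ c : Fin 4 → ℚ, (∀ i, 0 ≤ c i) ∧ w = ∑ i, c i • v i}) ∧
    (∀ j : Fin 4, ∀ a ∈ σ, ∀ b ∈ σ,
      (∃ t : ℚ, 0 ≤ t ∧ a + b = t • v j) →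
      ((∃ t : ℚ, 0 ≤ t ∧ a = t • v j) ∧ (∃ t : ℚ, 0 ≤ t ∧ b = t • v j))) := by
  have hA : (0:ℚ) < (l * q : ℚ) := by positivity
  have hB : (0:ℚ) < (l * p : ℚ) := by positivity
  subst hσ hv
  constructor
  · ext w
    simp only [Set.mem_setOf_eq]
    constructor
    · rintro ⟨h1, h2, h3, h4⟩
      set m : ℚ := max 0 (-w 0) with hm
      set n : ℚ := max 0 (-w 1) with hn
      have hm0 : 0 ≤ m := le_max_left _ _
      have hn0 : 0 ≤ n := le_max_left _ _
      have hmw : -w 0 ≤ m := le_max_right _ _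
      have hnw : -w 1 ≤ n := le_max_right _ _
      have hs : (l*q:ℚ) * m + (l*p:ℚ) * n ≤ w 2 := by
        rcases le_total 0 (w 0) with h | h <;> rcases le_total 0 (w 1) with h' | h'
        · rw [hm, hn, max_eq_left (by linarith), max_eq_left (by linarith)]; linarith
        · rw [hm, hn, max_eq_left (by linarith), max_eq_right (by linarith)]; linarith
        · rw [hm, hn, max_eq_right (by linarith), max_eq_left (by linarith)]; linarith
        · rw [hm, hn, max_eq_right (by linarith), max_eq_right (by linarith)]; linarith
      set s : ℚ := (w 2 - (l*q:ℚ) * m - (l*p:ℚ) * n) / (l*q:ℚ) with hsdef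
      have hs0 : 0 ≤ s := by
        apply div_nonneg _ hA.le; linarith
      have hmul : (l*q:ℚ) * s = w 2 - (l*q:ℚ) * m - (l*p:ℚ) * n := by
        rw [hsdef]; field_simp
      refine ⟨![w 0 + m + s, w 1 + n, m + s, n], ?_, ?_⟩
      · intro i
        fin_cases i <;> simp <;> linarith
      · funext x
        fin_cases x <;> simp [Fin.sum_univ_four] <;> linarith [hmul]
    · rintro ⟨c, hc, hw⟩
      have h0 := congrFun hw 0
      have h1 := congrFun hw 1
      have h2 := congrFun hw 2
      simp [Fin.sum_univ_four] at h0 h1 h2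
      have p0 := mul_nonneg hA.le (hc 0)
      have p1 := mul_nonneg hB.le (hc 1)
      have p2 := mul_nonneg hA.le (hc 2)
      have p3 := mul_nonneg hB.le (hc 3)
      have e0 : (l*q:ℚ) * w 0 = (l*q:ℚ) * c 0 - (l*q:ℚ) * c 2 := by rw [h0]; ring
      have e1 : (l*p:ℚ) * w 1 = (l*p:ℚ) * c 1 - (l*p:ℚ) * c 3 := by rw [h1]; ring
      have e2 : w 2 = (l*q:ℚ) * c 2 + (l*p:ℚ) * c 3 := by rw [h2]; ring
      exact ⟨by linarith, by linarith, by linarith, by linarith⟩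
  · intro j a ha b hb ⟨t, ht, hab⟩
    simp only [Set.mem_setOf_eq] at ha hb
    obtain ⟨ha1, ha2, ha3, ha4⟩ := ha
    obtain ⟨hb1, hb2, hb3, hb4⟩ := hb
    have h0 := congrFun hab 0
    have h1 := congrFun hab 1
    have h2 := congrFun hab 2
    fin_cases j <;> simp at h0 h1 h2
    -- j = 0 : v 0 = (1,0,0)
    · have ea2 : a 2 = 0 := by linarith
      have eb2 : b 2 = 0 := by linarith
      have ha1' : 0 ≤ a 1 := by nlinarith
      have hb1' : 0 ≤ b 1 := by nlinarith
      have ea1 : a 1 = 0 := by linarith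
      have eb1 : b 1 = 0 := by linarith
      have ha0 : 0 ≤ a 0 := by nlinarith
      have hb0 : 0 ≤ b 0 := by nlinarith
      exact ⟨⟨a 0, ha0, by funext x; fin_cases x <;> simp <;> linarith⟩,
             ⟨b 0, hb0, by funext x; fin_cases x <;> simp <;> linarith⟩⟩
    -- j = 1 : v 1 = (0,1,0)
    · have ea2 : a 2 = 0 := by linarith
      have eb2 : b 2 = 0 := by linarith
      have ha0' : 0 ≤ a 0 := by nlinarith
      have hb0' : 0 ≤ b 0 := by nlinarith
      have ea0 : a 0 = 0 := by linarith
      have eb0 : b 0 = 0 := by linarith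
      have ha1 : 0 ≤ a 1 := by nlinarith
      have hb1 : 0 ≤ b 1 := by nlinarith
      exact ⟨⟨a 1, ha1, by funext x; fin_cases x <;> simp <;> linarith⟩,
             ⟨b 1, hb1, by funext x; fin_cases x <;> simp <;> linarith⟩⟩
    -- j = 2 : v 2 = (-1,0,lq)
    · -- h0 : a 0 + b 0 = -t (or t * -1), h1 : a 1 + b 1 = 0, h2 : a 2 + b 2 = t * (l*q)
      have e : (l*q:ℚ) * b 0 = -((l*q:ℚ) * a 0) - (a 2 + b 2) := by
        have hb0 : b 0 = -t - a 0 := by linarith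
        rw [hb0, h2]; ring
      have e' : (l*q:ℚ) * a 0 = -((l*q:ℚ) * b 0) - (a 2 + b 2) := by linarith
      have hBa1 : 0 ≤ (l*p:ℚ) * a 1 := by linarith
      have hBb1 : 0 ≤ (l*p:ℚ) * b 1 := by linarith
      have hb1' : (l*p:ℚ) * b 1 = -((l*p:ℚ) * a 1) := by
        have : b 1 = -a 1 := by linarith
        rw [this]; ring
      have ea1 : a 1 = 0 := by
        have hz : (l*p:ℚ) * a 1 = 0 := by linarith
        rcases mul_eq_zero.mp hz with h | h
        · exact absurd h hB.ne'
        · exact h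
      have eb1 : b 1 = 0 := by linarith
      have hfa : (l*q:ℚ) * a 0 + a 2 = 0 := by linarith
      have hfb : (l*q:ℚ) * b 0 + b 2 = 0 := by linarith
      refine ⟨⟨a 2 / (l*q:ℚ), div_nonneg ha1 hA.le, ?_⟩,
             ⟨b 2 / (l*q:ℚ), div_nonneg hb1 hA.le, ?_⟩⟩ <;>
        [skip; skip] <;> funext x <;> fin_cases x <;> simp <;> (try field_simp) <;> linarith
    -- j = 3 : v 3 = (0,-1,lp)
    · have e : (l*p:ℚ) * b 1 = -((l*p:ℚ) * a 1) - (a 2 + b 2) := by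
        have hb1 : b 1 = -t - a 1 := by linarith
        rw [hb1, h2]; ring
      have e' : (l*p:ℚ) * a 1 = -((l*p:ℚ) * b 1) - (a 2 + b 2) := by linarith
      have hAa0 : 0 ≤ (l*q:ℚ) * a 0 := by linarith
      have hAb0 : 0 ≤ (l*q:ℚ) * b 0 := by linarith
      have hb0' : (l*q:ℚ) * b 0 = -((l*q:ℚ) * a 0) := by
        have : b 0 = -a 0 := by linarith
        rw [this]; ring
      have ea0 : a 0 = 0 := by
        have hz : (l*q:ℚ) * a 0 = 0 := by linarith
        rcases mul_eq_zero.mp hz with h | h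
        · exact absurd h hA.ne'
        · exact h
      have eb0 : b 0 = 0 := by linarith
      have hfa : (l*p:ℚ) * a 1 + a 2 = 0 := by linarith
      have hfb : (l*p:ℚ) * b 1 + b 2 = 0 := by linarith
      refine ⟨⟨a 2 / (l*p:ℚ), div_nonneg ha1 hB.le, ?_⟩,
             ⟨b 2 / (l*p:ℚ), div_nonneg hb1 hB.le, ?_⟩⟩ <;>
        [skip; skip] <;> funext x <;> fin_cases x <;> simp <;> (try field_simp) <;> linarith
end

section
/- For the cone σ = cone((1,0,0),(0,1,0),(−1,0,lq),(0,−1,lp)) ⊂ ℚ³ with dual lattice N = ℤ³, the quotient ℤ⁴ / image of the map M = ℤ³ → ℤ⁴, m ↦ (⟨m,n_ρ⟩)_ρ, with n₁=(1,0,0), n₂=(0,1,0), n₃=(−1,0,lq), n₄=(0,−1,lp), is isomorphic to ℤ ⊕ ℤ/gcd(lq,lp). -/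
open scoped BigOperators

/-- Auxiliary linear map `ℤ⁴ → ℤ × ℤ` used to split off the cokernel. -/
def stmt14L (a b u v : ℤ) : (Fin 4 → ℤ) →ₗ[ℤ] ℤ × ℤ where
  toFun x := (b * (x 2 + x 0) - a * (x 3 + x 1), u * (x 2 + x 0) + v * (x 3 + x 1))
  map_add' x y := by
    simp only [Pi.add_apply, Prod.mk_add_mk, Prod.mk.injEq]
    constructor <;> ring
  map_smul' c x := by
    simp only [Pi.smul_apply, smul_eq_mul, RingHom.id_apply, Prod.smul_mk, Prod.mk.injEq]
    constructor <;> ring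

/-- Auxiliary linear map `ℤ⁴ → ℤ × ZMod G`. -/
def stmt14F (G : ℕ) (a b u v : ℤ) : (Fin 4 → ℤ) →ₗ[ℤ] ℤ × ZMod G :=
  (LinearMap.prodMap LinearMap.id ((Int.castAddHom (ZMod G)).toIntLinearMap)).comp
    (stmt14L a b u v)

theorem stmt14F_apply (G : ℕ) (a b u v : ℤ) (x : Fin 4 → ℤ) :
    stmt14F G a b u v x =
      (b * (x 2 + x 0) - a * (x 3 + x 1),
        ((u * (x 2 + x 0) + v * (x 3 + x 1) : ℤ) : ZMod G)) := rfl

/-- For the cone with primitive ray generators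
`n₁=(1,0,0), n₂=(0,1,0), n₃=(−1,0,lq), n₄=(0,−1,lp)` in `N = ℤ³`, the cokernel
of the map `M = ℤ³ → ℤ⁴`, `m ↦ (⟨m, n_ρ⟩)_ρ`, is isomorphic to
`ℤ ⊕ ℤ/gcd(lq, lp)` (the divisor class group of the associated affine toric
variety). -/
theorem stmt14 (l p q : ℕ) (hl : 0 < l) (hp : 0 < p) (hq : 0 < q)
    (n : Fin 4 → Fin 3 → ℤ)
    (hn : n = ![![1, 0, 0], ![0, 1, 0], ![-1, 0, (l * q : ℤ)], ![0, -1, (l * p : ℤ)]])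
    (φ : (Fin 3 → ℤ) →ₗ[ℤ] (Fin 4 → ℤ))
    (hφ : ∀ m ρ, φ m ρ = ∑ i, m i * n ρ i) :
    Nonempty (((Fin 4 → ℤ) ⧸ LinearMap.range φ) ≃+ ℤ × ZMod (Nat.gcd (l * q) (l * p))) := by
  set A : ℕ := l * q with hA
  set B : ℕ := l * p with hB
  set G : ℕ := Nat.gcd A B with hG
  have hGpos : 0 < G := Nat.gcd_pos_of_pos_left _ (Nat.mul_pos hl hq)
  have hGz : (G : ℤ) ≠ 0 := by exact_mod_cast hGpos.ne'
  set a : ℤ := ((A / G : ℕ) : ℤ) with ha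
  set b : ℤ := ((B / G : ℕ) : ℤ) with hb
  have hAa : (A : ℤ) = G * a := by
    rw [ha]
    exact_mod_cast (Nat.mul_div_cancel' (Nat.gcd_dvd_left A B)).symm
  have hBb : (B : ℤ) = G * b := by
    rw [hb]
    exact_mod_cast (Nat.mul_div_cancel' (Nat.gcd_dvd_right A B)).symm
  set u : ℤ := Nat.gcdA A B with hu
  set v : ℤ := Nat.gcdB A B with hv
  have hbez : (G : ℤ) = A * u + B * v := Nat.gcd_eq_gcd_ab A B
  have hone : a * u + b * v = 1 := by
    have key : (G : ℤ) * (a * u + b * v) = (G : ℤ) * 1 := by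
      linear_combination (-u) * hAa + (-v) * hBb + (-1 : ℤ) * hbez
    simpa using mul_left_cancel₀ hGz key
  set F : (Fin 4 → ℤ) →ₗ[ℤ] ℤ × ZMod G := stmt14F G a b u v with hF
  have hφeval : ∀ m : Fin 3 → ℤ,
      φ m 0 = m 0 ∧ φ m 1 = m 1 ∧ φ m 2 = -m 0 + m 2 * A ∧ φ m 3 = -m 1 + m 2 * B := by
    intro m
    refine ⟨?_, ?_, ?_, ?_⟩ <;>
      simp [hφ, hn, Fin.sum_univ_three, hA, hB] <;> push_cast <;> ring
  have hrange : LinearMap.range φ ≤ LinearMap.ker F := by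
    rintro x ⟨m, rfl⟩
    obtain ⟨h0, h1, h2, h3⟩ := hφeval m
    rw [LinearMap.mem_ker, hF, stmt14F_apply, h0, h1, h2, h3]
    have e1 : b * (-m 0 + m 2 * (A : ℤ) + m 0) - a * (-m 1 + m 2 * B + m 1) = 0 := by
      linear_combination (m 2 * b) * hAa + (-(m 2 * a)) * hBb
    have e2 : u * (-m 0 + m 2 * (A : ℤ) + m 0) + v * (-m 1 + m 2 * B + m 1)
        = m 2 * G := by linear_combination (-(m 2)) * hbez
    rw [e1, e2]
    have : ((m 2 * (G : ℤ) : ℤ) : ZMod G) = 0 := by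
      push_cast
      simp [ZMod.natCast_self]
    rw [this]
    rfl
  set ψ : ((Fin 4 → ℤ) ⧸ LinearMap.range φ) →ₗ[ℤ] ℤ × ZMod G :=
    Submodule.liftQ _ F hrange with hψ
  have hsurj : Function.Surjective ψ := by
    rintro ⟨s, t⟩
    obtain ⟨t', rfl⟩ := ZMod.intCast_surjective t
    refine ⟨Submodule.Quotient.mk ![0, 0, v * s + a * t', -u * s + b * t'], ?_⟩
    rw [hψ, Submodule.liftQ_apply, hF, stmt14F_apply]
    have hx0 : (![0, 0, v * s + a * t', -u * s + b * t'] : Fin 4 → ℤ) 0 = 0 := rfl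
    have hx1 : (![0, 0, v * s + a * t', -u * s + b * t'] : Fin 4 → ℤ) 1 = 0 := rfl
    have hx2 : (![0, 0, v * s + a * t', -u * s + b * t'] : Fin 4 → ℤ) 2
        = v * s + a * t' := rfl
    have hx3 : (![0, 0, v * s + a * t', -u * s + b * t'] : Fin 4 → ℤ) 3
        = -u * s + b * t' := rfl
    rw [hx0, hx1, hx2, hx3]
    have e1 : b * (v * s + a * t' + 0) - a * (-u * s + b * t' + 0) = s := by
      linear_combination s * hone
    have e2 : u * (v * s + a * t' + 0) + v * (-u * s + b * t' + 0) = t' := by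
      linear_combination t' * hone
    rw [e1, e2]
  have hker : LinearMap.ker F ≤ LinearMap.range φ := by
    intro x hx
    rw [LinearMap.mem_ker, hF, stmt14F_apply, Prod.mk_eq_zero] at hx
    obtain ⟨h1, h2⟩ := hx
    have h2' : (G : ℤ) ∣ u * (x 2 + x 0) + v * (x 3 + x 1) := by
      exact_mod_cast (ZMod.intCast_zmod_eq_zero_iff_dvd _ G).mp h2
    obtain ⟨k, hk⟩ := h2'
    have hs2 : x 2 + x 0 = (A : ℤ) * k := by
      linear_combination (-(x 2 + x 0)) * hone + v * h1 + a * hk + (-k) * hAa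
    have hs3 : x 3 + x 1 = (B : ℤ) * k := by
      linear_combination (-(x 3 + x 1)) * hone + (-u) * h1 + b * hk + (-k) * hBb
    refine ⟨![x 0, x 1, k], ?_⟩
    obtain ⟨h0', h1', h2'', h3'⟩ := hφeval ![x 0, x 1, k]
    have hm0 : (![x 0, x 1, k] : Fin 3 → ℤ) 0 = x 0 := rfl
    have hm1 : (![x 0, x 1, k] : Fin 3 → ℤ) 1 = x 1 := rfl
    have hm2 : (![x 0, x 1, k] : Fin 3 → ℤ) 2 = k := rfl
    rw [hm0] at h0' h2''
    rw [hm1] at h1' h3'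
    rw [hm2] at h2'' h3'
    funext ρ
    fin_cases ρ
    · exact h0'
    · exact h1'
    · show φ ![x 0, x 1, k] 2 = x 2
      rw [h2'']; linarith [hs2]
    · show φ ![x 0, x 1, k] 3 = x 3
      rw [h3']; linarith [hs3]
  have hinj : Function.Injective ψ := by
    rw [← LinearMap.ker_eq_bot, hψ, Submodule.ker_liftQ_eq_bot]
    exact hker
  exact ⟨(LinearEquiv.ofBijective ψ ⟨hinj, hsurj⟩).toAddEquiv⟩
end
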